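/- arXiv:1609.03805 — 2 statements merged into one kernel-verified Lean document; each statement's English description precedes it below -/
import Mathlib

section
/- Let 𝒞 be a category with a subcategory W containing all objects, and suppose 𝒞 admits a functorial factorization of every morphism as a morphism in a subcategory C followed by a morphism in W, such that the factorization is natural. If D ⊆ 𝒞 is the subcategory with morphisms in C and E ⊆ 𝒞 is the subcategory with morphisms factoring appropriately, and the functorial factorization induces functors in both directions between the categories w(𝒞^[k]_R) and w(𝒞^[k]) together with natural weak equivalences to the identities, then the inclusion N w(𝒞^[k]_R) → N w(𝒞^[k]) is a simplicial homotopy equivalence of nerves. -/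
open CategoryTheory Simplicial CategoryTheory.Limits

universe u

noncomputable section

/-- The map `X ⟶ Δ[1]` constant at the vertex `k`. -/
def constMap (X : SSet) (k : Fin 2) : X ⟶ Δ[1] where
  app m := TypeCat.ofHom (fun _ => SSet.stdSimplex.const 1 k m)
  naturality := by intros; rfl

/-- The endpoint inclusion `X ⟶ X ⨯ Δ[1]` at the vertex `k`. -/
def endpt (X : SSet.{u}) (k : Fin 2) : X ⟶ X ⨯ Δ[1] :=
  prod.lift (𝟙 X) (constMap X k)

/-- Two maps of simplicial sets are related by an elementary homotopy if there is a map
`X ⨯ Δ[1] ⟶ Y` restricting to them on the two endpoints. -/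
def HomotopicOne {X Y : SSet.{u}} (f g : X ⟶ Y) : Prop :=
  ∃ H : X ⨯ Δ[1] ⟶ Y, endpt X 0 ≫ H = f ∧ endpt X 1 ≫ H = g

/-- Simplicial homotopy: the equivalence relation generated by elementary homotopies. -/
def SHomotopic {X Y : SSet} (f g : X ⟶ Y) : Prop :=
  Relation.EqvGen HomotopicOne f g

/-- A map of simplicial sets is a (simplicial) homotopy equivalence if it admits a
homotopy inverse. -/
def IsSHomotopyEquiv {X Y : SSet} (f : X ⟶ Y) : Prop :=
  ∃ g : Y ⟶ X, SHomotopic (f ≫ g) (𝟙 X) ∧ SHomotopic (g ≫ f) (𝟙 Y)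

/-- Two simplicial sets are homotopy equivalent. -/
def SHomotopyEquivalent (X Y : SSet) : Prop :=
  ∃ f : X ⟶ Y, IsSHomotopyEquiv f

end

/-!
A natural transformation `γ : F ⟶ G` between functors `A ⥤ B` is the same as a functor
`[1] × A ⥤ B` restricting to `F` and `G` at the two ends. Since an `n`-simplex of
`N A × Δ[1]` is a functor `[n] ⥤ [1] × A`, composing with it is a simplicial homotopy from
`N F` to `N G`. Applied to `i ⋙ r ⟶ 𝟭 A` and `r ⋙ i ⟶ 𝟭 B`, this makes `N r` a homotopy
inverse of `N i`.
-/

open CategoryTheory Simplicial CategoryTheory.Limits MonoidalCategory CartesianMonoidalCategory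

universe v

lemma endpt_comp_lift_fst_snd (X : SSet.{u}) (k : Fin 2) :
    endpt X k ≫ lift prod.fst prod.snd = lift (𝟙 X) (constMap X k) := by
  apply CartesianMonoidalCategory.hom_ext <;> simp only [Category.assoc, lift_fst, lift_snd]
  exacts [prod.lift_fst _ _, prod.lift_snd _ _]

-- `HomotopicOne` is phrased with the limit product `⨯`, `SSet.Homotopy` with the monoidal `⊗`.
lemma HomotopicOne.of_homotopy {X Y : SSet.{u}} {f g : X ⟶ Y} (H : SSet.Homotopy f g) :
    HomotopicOne f g :=
  ⟨lift prod.fst prod.snd ≫ H.h,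
    by rw [← Category.assoc, endpt_comp_lift_fst_snd]; exact H.h₀,
    by rw [← Category.assoc, endpt_comp_lift_fst_snd]; exact H.h₁⟩

lemma CategoryTheory.Functor.prod'_const_comp_uncurry {J C D E : Type*} [Category J]
    [Category C] [Category D] [Category E] (K : C ⥤ D ⥤ E) (c : C) (x : J ⥤ D) :
    ((Functor.const J).obj c).prod' x ⋙ Functor.uncurry.obj K = x ⋙ K.obj c :=
  Functor.ext (fun _ => rfl) (by intros; simp)

namespace CategoryTheory.NatTrans

variable {A B : Type u} [Category.{v} A] [Category.{v} B] {F G : A ⥤ B}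

def cylinder (γ : F ⟶ G) : Fin 2 × A ⥤ B :=
  Functor.uncurry.obj (ComposableArrows.mk₁ γ)

def nerveHomotopy (γ : F ⟶ G) : SSet.Homotopy (nerveMap F) (nerveMap G) where
  h.app _ := TypeCat.ofHom fun x => x.2.down.toOrderHom.monotone.functor.prod' x.1 ⋙ γ.cylinder
  h.naturality _ _ _ := rfl
  h₀ := by
    ext _ x
    exact Functor.prod'_const_comp_uncurry (ComposableArrows.mk₁ γ) 0 x
  h₁ := by
    ext _ x
    exact Functor.prod'_const_comp_uncurry (ComposableArrows.mk₁ γ) 1 x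
  rel := by ext _ ⟨⟨_, ⟨⟩⟩, _⟩

lemma sHomotopic_nerveMap (γ : F ⟶ G) : SHomotopic (nerveMap F) (nerveMap G) :=
  .rel _ _ (.of_homotopy γ.nerveHomotopy)

end CategoryTheory.NatTrans

theorem nerve_inclusion_homotopy_equivalence_general {A B : Type u}
    [SmallCategory A] [SmallCategory B] (i : A ⥤ B)
    (r : B ⥤ A) (α : i ⋙ r ⟶ 𝟭 A) (β : r ⋙ i ⟶ 𝟭 B) :
    IsSHomotopyEquiv (nerveFunctor.{u, u}.map (show Cat.of A ⟶ Cat.of B from i.toCatHom)) :=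
  ⟨nerveMap r, α.sHomotopic_nerveMap, β.sHomotopic_nerveMap⟩

/-- Abstract form of the lemma: let `A = w(𝒞^[k]_R)` be the (full) subcategory of Reedy
cofibrant diagrams inside `B = w(𝒞^[k])`, with inclusion `i`. If the functorial factorization
induces a functor `r` in the opposite direction together with natural (weak equivalence)
transformations connecting both composites with the identities, then the inclusion
`N w(𝒞^[k]_R) → N w(𝒞^[k])` is a simplicial homotopy equivalence of nerves. -/
theorem nerve_inclusion_homotopy_equivalence {A B : Type u}
    [SmallCategory A] [SmallCategory B] (i : A ⥤ B) (hfull : i.Full) (hfaithful : i.Faithful)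
    (r : B ⥤ A) (α : i ⋙ r ⟶ 𝟭 A) (β : r ⋙ i ⟶ 𝟭 B) :
    IsSHomotopyEquiv (nerveFunctor.{u, u}.map (show Cat.of A ⟶ Cat.of B from i.toCatHom)) :=
  nerve_inclusion_homotopy_equivalence_general i r α β
end

section
/- In the category of small groupoids, every functor F : 𝒢₁ → 𝒢₂ that is both injective on objects and an equivalence of categories admits a retraction r : 𝒢₂ → 𝒢₁ with r∘F = id and a natural isomorphism F∘r ≅ id. -/
open CategoryTheory

/-- Acyclic cofibrations of groupoids split: every functor of small groupoids which is
injective on objects and an equivalence of categories admits a retraction `r` with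
`r ∘ F = id` and a natural isomorphism `F ∘ r ≅ id`. -/
theorem acyclic_cofibration_splits {G₁ G₂ : Type*} [Groupoid G₁] [Groupoid G₂]
    (F : G₁ ⥤ G₂) (hinj : Function.Injective F.obj) (heq : F.IsEquivalence) :
    ∃ r : G₂ ⥤ G₁, F ⋙ r = 𝟭 G₁ ∧ Nonempty (r ⋙ F ≅ 𝟭 G₂) := by
  classical
  haveI := heq
  let p : ∀ y : G₂, Σ' x : G₁, F.obj x ≅ y := fun y =>
    if h : ∃ x, F.obj x = y then ⟨h.choose, eqToIso h.choose_spec⟩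
    else ⟨F.objPreimage y, F.objObjPreimageIso y⟩
  have haux : ∀ (z x : G₁) (e : F.obj z = F.obj x), z = x →
      (⟨z, eqToIso e⟩ : Σ' w : G₁, F.obj w ≅ F.obj x) = ⟨x, eqToIso rfl⟩ := by
    intro z x e hzx
    subst hzx
    rfl
  have hp : ∀ x : G₁, p (F.obj x) = ⟨x, eqToIso rfl⟩ := by
    intro x
    have h : ∃ z, F.obj z = F.obj x := ⟨x, rfl⟩
    have key : p (F.obj x) = ⟨h.choose, eqToIso h.choose_spec⟩ := dif_pos h
    rw [key]
    exact haux _ _ _ (hinj h.choose_spec)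
  have hp1 : ∀ x : G₁, (p (F.obj x)).1 = x := fun x => by rw [hp]
  let r : G₂ ⥤ G₁ :=
    { obj := fun y => (p y).1
      map := fun {y y'} f => F.preimage ((p y).2.hom ≫ f ≫ (p y').2.inv)
      map_id := fun y => F.map_injective (by simp)
      map_comp := fun f g => F.map_injective (by simp) }
  refine ⟨r, ?_, ⟨NatIso.ofComponents (fun y => (p y).2) ?_⟩⟩
  · have hhom : ∀ (x : G₁) (a : Σ' w : G₁, F.obj w ≅ F.obj x),
        a = ⟨x, eqToIso rfl⟩ → ∀ e : F.obj a.1 = F.obj x, a.2.hom = eqToHom e := by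
      intro x a h e
      subst h
      rfl
    have hinv : ∀ (x : G₁) (a : Σ' w : G₁, F.obj w ≅ F.obj x),
        a = ⟨x, eqToIso rfl⟩ → ∀ e : F.obj x = F.obj a.1, a.2.inv = eqToHom e := by
      intro x a h e
      subst h
      rfl
    refine CategoryTheory.Functor.ext (fun x => hp1 x) (fun x y f => ?_)
    apply F.map_injective
    rw [Functor.comp_map]
    show F.map (F.preimage ((p (F.obj x)).2.hom ≫ F.map f ≫ (p (F.obj y)).2.inv)) = _
    rw [F.map_preimage,
      hhom x _ (hp x) (congrArg F.obj (hp1 x)),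
      hinv y _ (hp y) (congrArg F.obj (hp1 y)).symm]
    simp [eqToHom_map]
  · intro y y' f
    simp [r]
end
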